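/- For every operator a in the closure of the *-subalgebra of bounded operators on H generated by π₁(S) and π₁(e), the commutator F₁∘a − a∘F₁ is a compact operator. (This is the statement that (H, π₁, F₁, γ) defines an even Fredholm module over the group C*-algebra of Γ.) -/

import Mathlib

set_option maxHeartbeats 1000000
set_option synthInstance.maxHeartbeats 1000000


noncomputable section

open ContinuousLinearMap

/-- The Hilbert space `ℓ²(ℤ)` of square-summable complex sequences. -/
abbrev H : Type := lp (fun _ : ℤ => ℂ) 2

/-- The standard orthonormal basis vector `eₙ` of `ℓ²(ℤ)`. -/
def eb (n : ℤ) : H := lp.single 2 n 1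

/-- `sign n = 1` for `n ≥ 0` and `−1` for `n < 0`, as a complex scalar. -/
def sgn (n : ℤ) : ℂ := if 0 ≤ n then 1 else -1

/-- The Hilbert space `H = ℓ²(ℤ) ⊕ ℓ²(ℤ)` (with the `ℓ²`-direct sum structure). -/
abbrev H2 : Type := WithLp 2 (H × H)

/-- The identification `H2 ≃ H × H`. -/
def eqv : H2 ≃L[ℂ] H × H := WithLp.prodContinuousLinearEquiv 2 ℂ H H

/-- The 2×2 block operator `[[A, B], [C, D]]` on `H2 = ℓ²(ℤ) ⊕ ℓ²(ℤ)`. -/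
def blk (A B C D : H →L[ℂ] H) : H2 →L[ℂ] H2 :=
  (eqv.symm : (H × H) →L[ℂ] H2) ∘L
    ((ContinuousLinearMap.inl ℂ H H ∘L
        (A ∘L ContinuousLinearMap.fst ℂ H H + B ∘L ContinuousLinearMap.snd ℂ H H)) +
      (ContinuousLinearMap.inr ℂ H H ∘L
        (C ∘L ContinuousLinearMap.fst ℂ H H + D ∘L ContinuousLinearMap.snd ℂ H H))) ∘L
    (eqv : H2 →L[ℂ] H × H)


namespace FredholmAux

local notation "⟪" x ", " y "⟫" => @inner ℂ _ _ x y

lemma eb_coord (x : H) (n : ℤ) : ⟪eb n, x⟫ = x n := by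
  rw [eb, lp.inner_single_left]
  simp [RCLike.inner_apply]

lemma coord_ext {x y : H} (h : ∀ n, ⟪eb n, x⟫ = ⟪eb n, y⟫) : x = y := by
  ext n
  have := h n
  rwa [eb_coord, eb_coord] at this

lemma eb_ext {T T' : H →L[ℂ] H} (h : ∀ n, T (eb n) = T' (eb n)) : T = T' := by
  refine ContinuousLinearMap.ext fun f => ?_
  have hf := lp.hasSum_single (E := fun _ : ℤ => ℂ) ENNReal.ofNat_ne_top f
  have h1 : HasSum (fun n : ℤ => T (lp.single 2 n (f n))) (T f) := hf.mapL T
  have h2 : HasSum (fun n : ℤ => T' (lp.single 2 n (f n))) (T' f) := hf.mapL T'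
  have he : ∀ n : ℤ, T (lp.single 2 n (f n)) = T' (lp.single 2 n (f n)) := by
    intro n
    have : lp.single (E := fun _ : ℤ => ℂ) 2 n (f n) = f n • eb n := by
      rw [eb, ← lp.single_smul]; norm_num
    rw [this, map_smul, map_smul, h n]
  rw [funext he] at h1
  exact h1.unique h2

lemma rank_one_compact (v w : H) :
    IsCompactOperator (ContinuousLinearMap.toSpanSingleton ℂ v ∘L innerSL ℂ w) := by
  refine ⟨(· • v) '' Metric.closedBall (0 : ℂ) ‖w‖, ?_, ?_⟩
  · exact (isCompact_closedBall 0 ‖w‖).image (by fun_prop)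
  · refine Filter.mem_of_superset (Metric.ball_mem_nhds 0 one_pos) ?_
    intro x hx
    refine ⟨⟪w, x⟫, ?_, rfl⟩
    simp only [Metric.mem_closedBall, dist_zero_right]
    calc ‖⟪w, x⟫‖ ≤ ‖w‖ * ‖x‖ := norm_inner_le_norm w x
    _ ≤ ‖w‖ * 1 := by
        have : ‖x‖ ≤ 1 := le_of_lt (by simpa using hx)
        exact mul_le_mul_of_nonneg_left this (norm_nonneg w)
    _ = ‖w‖ := mul_one _

lemma blk_apply (A B C D : H →L[ℂ] H) (x : H2) :
    blk A B C D x = eqv.symm (A (eqv x).1 + B (eqv x).2, C (eqv x).1 + D (eqv x).2) := by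
  simp only [blk, comp_apply, add_apply, coe_comp', Function.comp_apply, inl_apply, inr_apply,
    coe_fst', coe_snd', ← map_add, Prod.mk_add_mk, add_zero, zero_add]
  rfl

lemma blk_comp (A B C D A' B' C' D' : H →L[ℂ] H) :
    blk A B C D ∘L blk A' B' C' D' =
      blk (A ∘L A' + B ∘L C') (A ∘L B' + B ∘L D')
        (C ∘L A' + D ∘L C') (C ∘L B' + D ∘L D') := by
  ext x
  simp only [comp_apply, blk_apply, ContinuousLinearEquiv.apply_symm_apply, add_apply,
    comp_apply, map_add]
  congr 1
  rw [Prod.ext_iff]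
  constructor <;> dsimp <;> abel

lemma blk_sub (A B C D A' B' C' D' : H →L[ℂ] H) :
    blk A B C D - blk A' B' C' D' = blk (A - A') (B - B') (C - C') (D - D') := by
  ext x
  simp only [ContinuousLinearMap.sub_apply, blk_apply, sub_apply, ← map_sub]
  congr 1
  rw [Prod.ext_iff]
  constructor <;> dsimp <;> abel

lemma blk_compact {A B C D : H →L[ℂ] H} (hA : IsCompactOperator A) (hB : IsCompactOperator B)
    (hC : IsCompactOperator C) (hD : IsCompactOperator D) :
    IsCompactOperator (blk A B C D) := by
  have h1 : IsCompactOperator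
      ((ContinuousLinearMap.inl ℂ H H ∘L
        (A ∘L ContinuousLinearMap.fst ℂ H H + B ∘L ContinuousLinearMap.snd ℂ H H)) +
      (ContinuousLinearMap.inr ℂ H H ∘L
        (C ∘L ContinuousLinearMap.fst ℂ H H + D ∘L ContinuousLinearMap.snd ℂ H H))) := by
    have hf : IsCompactOperator
        (A ∘L ContinuousLinearMap.fst ℂ H H + B ∘L ContinuousLinearMap.snd ℂ H H) := by
      exact (hA.comp_clm (ContinuousLinearMap.fst ℂ H H)).add
        (hB.comp_clm (ContinuousLinearMap.snd ℂ H H))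
    have hg : IsCompactOperator
        (C ∘L ContinuousLinearMap.fst ℂ H H + D ∘L ContinuousLinearMap.snd ℂ H H) := by
      exact (hC.comp_clm (ContinuousLinearMap.fst ℂ H H)).add
        (hD.comp_clm (ContinuousLinearMap.snd ℂ H H))
    exact (hf.clm_comp (ContinuousLinearMap.inl ℂ H H)).add
      (hg.clm_comp (ContinuousLinearMap.inr ℂ H H))
  exact (h1.comp_clm (eqv : H2 →L[ℂ] H × H)).clm_comp (eqv.symm : (H × H) →L[ℂ] H2)

lemma star_blk (A B C D : H →L[ℂ] H) :
    star (blk A B C D) = blk (star A) (star C) (star B) (star D) := by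
  rw [star_eq_adjoint]
  symm
  rw [ContinuousLinearMap.eq_adjoint_iff]
  intro x y
  simp only [blk_apply, eqv, WithLp.prodContinuousLinearEquiv_apply,
    WithLp.prodContinuousLinearEquiv_symm_apply, WithLp.toLp_fst, WithLp.toLp_snd,
    WithLp.ofLp_fst, WithLp.ofLp_snd, WithLp.prod_inner_apply, inner_add_left, inner_add_right,
    star_eq_adjoint, adjoint_inner_left, adjoint_inner_right]
  ring


lemma inner_eb (m n : ℤ) : ⟪eb m, eb n⟫ = if m = n then 1 else 0 := by
  rw [eb_coord, eb]
  by_cases h : m = n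
  · subst h
    rw [if_pos rfl]
    exact lp.single_apply_self _ _ _
  · rw [if_neg h]
    exact lp.single_apply_ne _ _ _ h

lemma star_S_apply (S : H →L[ℂ] H) (hS : ∀ n : ℤ, S (eb n) = eb (n + 1)) (n : ℤ) :
    star S (eb n) = eb (n - 1) := by
  apply coord_ext
  intro m
  rw [star_eq_adjoint, ContinuousLinearMap.adjoint_inner_right, hS, inner_eb, inner_eb]
  have : (m + 1 = n) ↔ (m = n - 1) := by omega
  simp [this]

lemma star_W (W : H →L[ℂ] H) (hW : ∀ n : ℤ, W (eb n) = eb (-n)) : star W = W := by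
  apply eb_ext
  intro n
  apply coord_ext
  intro m
  rw [star_eq_adjoint, ContinuousLinearMap.adjoint_inner_right, hW, hW, inner_eb, inner_eb]
  have : (-m = n) ↔ (m = -n) := by omega
  simp [this]

lemma comm1 (S F : H →L[ℂ] H) (hS : ∀ n : ℤ, S (eb n) = eb (n + 1))
    (hF : ∀ n : ℤ, F (eb n) = sgn n • eb n) :
    F ∘L S - S ∘L F =
      (2 : ℂ) • (ContinuousLinearMap.toSpanSingleton ℂ (eb 0) ∘L innerSL ℂ (eb (-1))) := by
  apply eb_ext
  intro n
  simp only [ContinuousLinearMap.sub_apply, comp_apply, ContinuousLinearMap.smul_apply,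
    innerSL_apply_apply, ContinuousLinearMap.toSpanSingleton_apply, hS, hF, map_smul, inner_eb]
  by_cases hn : n = -1
  · subst hn
    norm_num [sgn]
    module
  · have h1 : sgn (n + 1) = sgn n := by
      unfold sgn
      have : (0 ≤ n + 1) ↔ 0 ≤ n := by omega
      simp [this]
    have h2 : ¬ ((-1 : ℤ) = n) := fun h => hn h.symm
    simp [h1, h2]

lemma comm2 (S F : H →L[ℂ] H) (hS : ∀ n : ℤ, S (eb n) = eb (n + 1))
    (hF : ∀ n : ℤ, F (eb n) = sgn n • eb n) :
    F ∘L star S - star S ∘L F =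
      (-2 : ℂ) • (ContinuousLinearMap.toSpanSingleton ℂ (eb (-1)) ∘L innerSL ℂ (eb 0)) := by
  apply eb_ext
  intro n
  simp only [ContinuousLinearMap.sub_apply, comp_apply, ContinuousLinearMap.smul_apply,
    innerSL_apply_apply, ContinuousLinearMap.toSpanSingleton_apply, star_S_apply S hS, hF, map_smul,
    inner_eb]
  by_cases hn : n = 0
  · subst hn
    norm_num [sgn]
    module
  · have h1 : sgn (n - 1) = sgn n := by
      unfold sgn
      have : (0 ≤ n - 1) ↔ 0 ≤ n := by omega
      simp only [this]
    have h2 : ¬ ((0 : ℤ) = n) := fun h => hn h.symm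
    simp [h1, h2]

lemma comm3 (W F : H →L[ℂ] H) (hW : ∀ n : ℤ, W (eb n) = eb (-n))
    (hF : ∀ n : ℤ, F (eb n) = sgn n • eb n) :
    F ∘L W + W ∘L F =
      (2 : ℂ) • (ContinuousLinearMap.toSpanSingleton ℂ (eb 0) ∘L innerSL ℂ (eb 0)) := by
  apply eb_ext
  intro n
  simp only [ContinuousLinearMap.add_apply, comp_apply, ContinuousLinearMap.smul_apply,
    innerSL_apply_apply, ContinuousLinearMap.toSpanSingleton_apply, hW, hF, map_smul, inner_eb]
  by_cases hn : n = 0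
  · subst hn
    norm_num [sgn]
    module
  · have h1 : sgn (-n) = -sgn n := by
      unfold sgn
      have h3 : ¬ ((0 ≤ -n) ∧ (0 ≤ n)) := by omega
      have h4 : (0 ≤ -n) ∨ (0 ≤ n) := by omega
      rcases h4 with h | h
      · simp only [h, show ¬ (0 ≤ n) by omega, ↓reduceIte, neg_neg]
      · simp only [h, show ¬ (0 ≤ -n) by omega, ↓reduceIte]
    have h2 : ¬ ((0 : ℤ) = n) := fun h => hn h.symm
    simp [h1, h2, neg_smul]

lemma comm_block (T T' G : H →L[ℂ] H)
    (h1 : IsCompactOperator (G ∘L T' - T ∘L G)) (h2 : IsCompactOperator (G ∘L T - T' ∘L G)) :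
    IsCompactOperator
      (blk 0 G (-G) 0 ∘L blk T 0 0 T' - blk T 0 0 T' ∘L blk 0 G (-G) 0) := by
  have he : blk 0 G (-G) 0 ∘L blk T 0 0 T' - blk T 0 0 T' ∘L blk 0 G (-G) 0 =
      blk 0 (G ∘L T' - T ∘L G) (-(G ∘L T - T' ∘L G)) 0 := by
    rw [blk_comp, blk_comp, blk_sub]
    congr 1 <;> (simp; try abel)
  rw [he]
  exact blk_compact (by simpa using isCompactOperator_zero) h1 h2.neg
    (by simpa using isCompactOperator_zero)

lemma compact_smul (c : ℂ) (R : H →L[ℂ] H) (h : IsCompactOperator R) :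
    IsCompactOperator (c • R) := by
  simpa using h.smul c

end FredholmAux

open FredholmAux in
theorem fredholm_module_commutators_compact_aux (S W F : H →L[ℂ] H)
    (hS : ∀ n : ℤ, S (eb n) = eb (n + 1))
    (hW : ∀ n : ℤ, W (eb n) = eb (-n))
    (hF : ∀ n : ℤ, F (eb n) = sgn n • eb n) :
    ∀ a ∈ ((StarAlgebra.adjoin ℂ
        {blk S 0 0 S, blk W 0 0 (-W)}).topologicalClosure : StarSubalgebra ℂ (H2 →L[ℂ] H2)),
      IsCompactOperator
        (blk 0 (Complex.I • F) (-(Complex.I • F)) 0 ∘L a -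
          a ∘L blk 0 (Complex.I • F) (-(Complex.I • F)) 0) := by
  intro a ha
  set G : H →L[ℂ] H := Complex.I • F with hG
  set F₁ : H2 →L[ℂ] H2 := blk 0 G (-G) 0 with hF₁
  -- compact commutators on H
  have hc1 : IsCompactOperator (G ∘L S - S ∘L G) := by
    have he : G ∘L S - S ∘L G = (Complex.I * 2) •
        (ContinuousLinearMap.toSpanSingleton ℂ (eb 0) ∘L innerSL ℂ (eb (-1))) := by
      rw [hG, smul_comp, comp_smul, ← smul_sub, comm1 S F hS hF, smul_smul]
    rw [he]
    exact compact_smul _ _ (rank_one_compact _ _)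
  have hc2 : IsCompactOperator (G ∘L star S - star S ∘L G) := by
    have he : G ∘L star S - star S ∘L G = (Complex.I * (-2)) •
        (ContinuousLinearMap.toSpanSingleton ℂ (eb (-1)) ∘L innerSL ℂ (eb 0)) := by
      rw [hG, smul_comp, comp_smul, ← smul_sub, comm2 S F hS hF, smul_smul]
    rw [he]
    exact compact_smul _ _ (rank_one_compact _ _)
  have hc3 : IsCompactOperator (G ∘L W + W ∘L G) := by
    have he : G ∘L W + W ∘L G = (Complex.I * 2) •
        (ContinuousLinearMap.toSpanSingleton ℂ (eb 0) ∘L innerSL ℂ (eb 0)) := by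
      rw [hG, smul_comp, comp_smul, ← smul_add, comm3 W F hW hF, smul_smul]
    rw [he]
    exact compact_smul _ _ (rank_one_compact _ _)
  -- the set of operators with compact commutator with F₁
  have hclosed : IsClosed {b : H2 →L[ℂ] H2 | IsCompactOperator (F₁ ∘L b - b ∘L F₁)} := by
    have hcont : Continuous fun b : H2 →L[ℂ] H2 => F₁ ∘L b - b ∘L F₁ := by
      have : (fun b : H2 →L[ℂ] H2 => F₁ ∘L b - b ∘L F₁) = fun b => F₁ * b - b * F₁ := rfl
      rw [this]
      exact (continuous_mul_left F₁).sub (continuous_mul_right F₁)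
    exact isClosed_setOf_isCompactOperator.preimage hcont
  refine closure_minimal ?_ hclosed ha
  intro x hx
  rw [SetLike.mem_coe, ← StarSubalgebra.mem_toSubalgebra,
    StarAlgebra.adjoin_toSubalgebra] at hx
  induction hx using Algebra.adjoin_induction with
  | mem g hg =>
      have hgen : ∀ T T' : H →L[ℂ] H, IsCompactOperator (G ∘L T' - T ∘L G) →
          IsCompactOperator (G ∘L T - T' ∘L G) →
          (blk T 0 0 T') ∈ {b : H2 →L[ℂ] H2 | IsCompactOperator (F₁ ∘L b - b ∘L F₁)} :=
        fun T T' h1 h2 => comm_block T T' G h1 h2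
      simp only [Set.mem_union, Set.mem_insert_iff, Set.mem_singleton_iff, Set.mem_star] at hg
      rcases hg with (rfl | rfl) | (h | h)
      · exact hgen S S hc1 hc1
      · refine hgen W (-W) ?_ ?_
        · have : G ∘L (-W) - W ∘L G = -(G ∘L W + W ∘L G) := by
            rw [comp_neg]; abel
          rw [this]; exact hc3.neg
        · have : G ∘L W - (-W) ∘L G = G ∘L W + W ∘L G := by
            rw [neg_comp]; abel
          rw [this]; exact hc3
      · have hg' : g = star (blk S 0 0 S) := by rw [← h, star_star]
        rw [hg', star_blk, star_zero]
        exact hgen (star S) (star S) hc2 hc2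
      · have hg' : g = star (blk W 0 0 (-W)) := by rw [← h, star_star]
        rw [hg', star_blk, star_zero, star_neg, star_W W hW]
        refine hgen W (-W) ?_ ?_
        · have : G ∘L (-W) - W ∘L G = -(G ∘L W + W ∘L G) := by
            rw [comp_neg]; abel
          rw [this]; exact hc3.neg
        · have : G ∘L W - (-W) ∘L G = G ∘L W + W ∘L G := by
            rw [neg_comp]; abel
          rw [this]; exact hc3
  | algebraMap r =>
      have : F₁ ∘L algebraMap ℂ (H2 →L[ℂ] H2) r - algebraMap ℂ (H2 →L[ℂ] H2) r ∘L F₁ =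
          0 := by
        have := Algebra.commutes r F₁
        rw [show F₁ ∘L algebraMap ℂ (H2 →L[ℂ] H2) r = F₁ * algebraMap ℂ (H2 →L[ℂ] H2) r from rfl,
          show algebraMap ℂ (H2 →L[ℂ] H2) r ∘L F₁ = algebraMap ℂ (H2 →L[ℂ] H2) r * F₁ from rfl,
          this, sub_self]
      simp only [Set.mem_setOf_eq, this]
      simpa using isCompactOperator_zero
  | add x y hx hy ihx ihy =>
      have : F₁ ∘L (x + y) - (x + y) ∘L F₁ = (F₁ ∘L x - x ∘L F₁) + (F₁ ∘L y - y ∘L F₁) := by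
        rw [comp_add, add_comp]; abel
      simp only [Set.mem_setOf_eq, this]
      exact ihx.add ihy
  | mul x y hx hy ihx ihy =>
      have : F₁ ∘L (x * y) - (x * y) ∘L F₁ =
          (F₁ ∘L x - x ∘L F₁) ∘L y + x ∘L (F₁ ∘L y - y ∘L F₁) := by
        show F₁ * (x * y) - (x * y) * F₁ = (F₁ * x - x * F₁) * y + x * (F₁ * y - y * F₁)
        rw [sub_mul, mul_sub, mul_assoc F₁ x y, mul_assoc x y F₁, mul_assoc x F₁ y]
        abel
      simp only [Set.mem_setOf_eq, this]
      exact (ihx.comp_clm y).add (ihy.clm_comp x)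


open FredholmAux in
/-- `(H, π₁, F₁, γ)` is an even Fredholm module over `C*(Γ)`: with `π₁(S) = diag(S, S)`,
`π₁(e) = diag(W, −W)` and `F₁ = [[0, iF], [−iF, 0]]` (where `S` is the bilateral shift,
`W` the flip and `F` the sign operator on `ℓ²(ℤ)`), for every operator `a` in the closure
of the *-subalgebra of bounded operators on `H = ℓ²(ℤ) ⊕ ℓ²(ℤ)` generated by `π₁(S)` and
`π₁(e)`, the commutator `F₁∘a − a∘F₁` is a compact operator. -/
theorem fredholm_module_commutators_compact (S W F : H →L[ℂ] H)
    (hS : ∀ n : ℤ, S (eb n) = eb (n + 1))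
    (hW : ∀ n : ℤ, W (eb n) = eb (-n))
    (hF : ∀ n : ℤ, F (eb n) = sgn n • eb n) :
    ∀ a ∈ ((StarAlgebra.adjoin ℂ
        {blk S 0 0 S, blk W 0 0 (-W)}).topologicalClosure : StarSubalgebra ℂ (H2 →L[ℂ] H2)),
      IsCompactOperator
        (blk 0 (Complex.I • F) (-(Complex.I • F)) 0 ∘L a -
          a ∘L blk 0 (Complex.I • F) (-(Complex.I • F)) 0) :=
  fredholm_module_commutators_compact_aux S W F hS hW hF

end
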